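/- For T = (ab)^{m+1} c (ab)^m and T' = bb(ab)^m c (ab)^m (first character a substituted by b), the CDAWG edge counts satisfy e(T) = 2m+3 and e(T') = 4m+3, hence e(T') − e(T) = e(T) − 3. -/
import Mathlib


/-- 1-indexed ending positions of occurrences of `u` in `T`:
`i ∈ EndPos u T` iff `T[i-|u|+1..i] = u`. -/
def EndPos {α : Type*} (u T : List α) : Set ℕ :=
  {i | u.length ≤ i ∧ i ≤ T.length ∧ u <:+ T.take i}

/-- 0-indexed beginning positions of occurrences of `u` in `T`. -/
def BegPos {α : Type*} (u T : List α) : Set ℕ :=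
  {i | i + u.length ≤ T.length ∧ u <+: T.drop i}

/-- `u` is left-maximal in `T`: `u` is a prefix of `T`, or two distinct
characters immediately precede occurrences of `u` in `T`. -/
def LeftMaximal {α : Type*} (u T : List α) : Prop :=
  u <+: T ∨ ∃ c d : α, c ≠ d ∧ (c :: u) <:+: T ∧ (d :: u) <:+: T

/-- `u` is right-maximal in `T`: `u` is a suffix of `T`, or two distinct
characters immediately follow occurrences of `u` in `T`. -/
def RightMaximal {α : Type*} (u T : List α) : Prop :=
  u <:+ T ∨ ∃ c d : α, c ≠ d ∧ (u ++ [c]) <:+: T ∧ (u ++ [d]) <:+: T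

/-- `u` is maximal in `T` iff it is both left-maximal and right-maximal. -/
def MaximalSubstr {α : Type*} (u T : List α) : Prop :=
  LeftMaximal u T ∧ RightMaximal u T

/-- Out-degree of node `x` in `CDAWG(T)`: the number of distinct characters `c`
with `xc` a substring of `T` (and `0` for the sink `T` itself). -/
noncomputable def D {α : Type*} [DecidableEq α] (T x : List α) : ℕ :=
  if x = T then 0 else (T.toFinset.filter (fun c => (x ++ [c]) <:+: T)).card

open scoped Classical in
/-- Number of edges of `CDAWG(T)`: the total out-degree over all maximal
substrings of `T`. -/
noncomputable def cdawgSize {α : Type*} [DecidableEq α] (T : List α) : ℕ :=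
  ∑ x ∈ T.sublists.toFinset.filter (fun x => x <:+: T ∧ MaximalSubstr x T), D T x

/-- `(ab)^k`, the string `ab` repeated `k` times. -/
def abPow {α : Type*} (a b : α) (k : ℕ) : List α :=
  (List.replicate k [a, b]).flatten


namespace Stmt18

variable {α : Type*}

/-- occurrence of `u` in `T` at 0-indexed position `s`. -/
def Occ (u T : List α) (s : ℕ) : Prop :=
  s + u.length ≤ T.length ∧ ∀ j, j < u.length → u[j]? = T[s+j]?

lemma infix_iff_occ {u T : List α} : u <:+: T ↔ ∃ s, Occ u T s := by
  constructor
  · rintro ⟨p, q, rfl⟩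
    refine ⟨p.length, by simp, fun j hj => ?_⟩
    rw [List.append_assoc, List.getElem?_append_right (by omega),
      Nat.add_sub_cancel_left, List.getElem?_append_left hj]
  · rintro ⟨s, hlen, hget⟩
    have he : u = (T.drop s).take u.length := by
      apply List.ext_getElem?
      intro n
      by_cases hn : n < u.length
      · rw [List.getElem?_take_of_lt hn, List.getElem?_drop]
        exact hget n hn
      · rw [List.getElem?_eq_none (by omega),
          List.getElem?_eq_none (by simp; omega)]
    rw [he]
    exact ((List.take_prefix _ _).isInfix).trans (List.drop_suffix _ _).isInfix

lemma prefix_iff_occ {u T : List α} : u <+: T ↔ Occ u T 0 := by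
  constructor
  · rintro ⟨q, rfl⟩
    refine ⟨by simp, fun j hj => ?_⟩
    rw [Nat.zero_add, List.getElem?_append_left hj]
  · rintro ⟨hlen, hget⟩
    have he : u = T.take u.length := by
      apply List.ext_getElem?
      intro n
      by_cases hn : n < u.length
      · rw [List.getElem?_take_of_lt hn]; simpa using hget n hn
      · rw [List.getElem?_eq_none (by omega),
          List.getElem?_eq_none (by simp; omega)]
    rw [he]; exact List.take_prefix _ _

lemma suffix_iff_occ {u T : List α} :
    u <:+ T ↔ u.length ≤ T.length ∧ Occ u T (T.length - u.length) := by
  constructor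
  · rintro ⟨p, rfl⟩
    have hl : p.length = (p ++ u).length - u.length := by simp
    refine ⟨by simp, by simp, fun j hj => ?_⟩
    rw [← hl, List.getElem?_append_right (by omega), Nat.add_sub_cancel_left]
  · rintro ⟨hle, hlen, hget⟩
    have he : u = T.drop (T.length - u.length) := by
      apply List.ext_getElem?
      intro n
      by_cases hn : n < u.length
      · rw [List.getElem?_drop]; exact hget n hn
      · rw [List.getElem?_eq_none (by omega),
          List.getElem?_eq_none (by simp; omega)]
    rw [he]; exact List.drop_suffix _ _

lemma mem_iff_getElem?' {x : α} {u : List α} :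
    x ∈ u ↔ ∃ j, j < u.length ∧ u[j]? = some x := by
  rw [List.mem_iff_getElem?]
  constructor
  · rintro ⟨n, hn⟩
    exact ⟨n, by rw [List.getElem?_eq_some_iff] at hn; exact hn.1, hn⟩
  · rintro ⟨n, _, hn⟩; exact ⟨n, hn⟩


variable {α : Type*}

lemma abPow_succ (a b : α) (k : ℕ) : abPow a b (k+1) = a :: b :: abPow a b k := by
  rw [abPow, List.replicate_succ, List.flatten_cons]; rfl

lemma abPow_add (a b : α) (j k : ℕ) : abPow a b (j+k) = abPow a b j ++ abPow a b k := by
  rw [abPow, abPow, abPow, List.replicate_add, List.flatten_append]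

lemma abPow_one (a b : α) : abPow a b 1 = [a, b] := by simp [abPow]

lemma abPow_succ' (a b : α) (k : ℕ) : abPow a b (k+1) = abPow a b k ++ [a, b] := by
  rw [abPow_add, abPow_one]

lemma abPow_length (a b : α) (k : ℕ) : (abPow a b k).length = 2*k := by
  induction k with
  | zero => rfl
  | succ n ih => rw [abPow_succ]; simp [ih]; omega

lemma abPow_getElem? (a b : α) (k j : ℕ) :
    (abPow a b k)[j]? = if j < 2*k then some (if j % 2 = 0 then a else b) else none := by
  induction k generalizing j with
  | zero => rw [if_neg (by omega)]; exact List.getElem?_eq_none (by simp [abPow])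
  | succ n ih =>
    rw [abPow_succ]
    match j with
    | 0 => rw [if_pos (by omega), if_pos (by omega)]; rfl
    | 1 =>
      rw [if_pos (by omega), if_neg (by omega), List.getElem?_cons_succ,
        List.getElem?_cons_zero]
    | (j+2) =>
      rw [List.getElem?_cons_succ, List.getElem?_cons_succ, ih]
      have h2 : (j+2) % 2 = j % 2 := by omega
      rw [h2]
      by_cases h : j < 2*n
      · rw [if_pos h, if_pos (show j+2 < 2*(n+1) by omega)]
      · rw [if_neg h, if_neg (show ¬ (j+2 < 2*(n+1)) by omega)]

lemma mem_abPow {a b x : α} {k : ℕ} (h : x ∈ abPow a b k) : x = a ∨ x = b := by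
  simp only [abPow, List.mem_flatten] at h
  obtain ⟨l, hl, hx⟩ := h
  rw [List.eq_of_mem_replicate hl] at hx
  simpa using hx

lemma abPow_prefix (a b : α) {j k : ℕ} (h : j ≤ k) : abPow a b j <+: abPow a b k :=
  ⟨abPow a b (k-j), by rw [← abPow_add]; congr 1; omega⟩

lemma abPow_suffix (a b : α) {j k : ℕ} (h : j ≤ k) : abPow a b j <:+ abPow a b k :=
  ⟨abPow a b (k-j), by rw [← abPow_add]; congr 1; omega⟩

/-- `T = (ab)^(m+1) c (ab)^m`. -/
def TT (a b c : α) (m : ℕ) : List α := abPow a b (m + 1) ++ [c] ++ abPow a b m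

/-- `T' = bb(ab)^m c (ab)^m`. -/
def TT' (a b c : α) (m : ℕ) : List α := b :: b :: (abPow a b m ++ [c] ++ abPow a b m)

lemma lengthT (a b c : α) (m : ℕ) : (TT a b c m).length = 4*m+3 := by
  simp [TT, abPow_length]; omega

lemma lengthT' (a b c : α) (m : ℕ) : (TT' a b c m).length = 4*m+3 := by
  simp [TT', abPow_length]; omega

lemma getT (a b c : α) (m i : ℕ) :
    (TT a b c m)[i]? =
      if i < 2*m+2 then some (if i % 2 = 0 then a else b)
      else if i = 2*m+2 then some c
      else if i < 4*m+3 then some (if i % 2 = 0 then b else a)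
      else none := by
  have l1 : (abPow a b (m+1)).length = 2*m+2 := by rw [abPow_length]; omega
  rw [TT, List.append_assoc]
  by_cases h1 : i < 2*m+2
  · rw [List.getElem?_append_left (show i < (abPow a b (m+1)).length by omega),
      abPow_getElem?, if_pos (show i < 2*(m+1) by omega), if_pos h1]
  · rw [List.getElem?_append_right (show (abPow a b (m+1)).length ≤ i by omega), if_neg h1]
    by_cases h2 : i = 2*m+2
    · rw [if_pos h2, l1, h2]
      simp
    · rw [if_neg h2]
      have he : i - (abPow a b (m+1)).length = (i - (2*m+3)) + 1 := by omega
      rw [he, List.singleton_append, List.getElem?_cons_succ, abPow_getElem?]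
      by_cases h3 : i < 4*m+3
      · rw [if_pos (show i - (2*m+3) < 2*m by omega), if_pos h3]
        by_cases hp : i % 2 = 0
        · rw [if_pos hp, if_neg (show ¬ ((i - (2*m+3)) % 2 = 0) by omega)]
        · rw [if_neg hp, if_pos (show (i - (2*m+3)) % 2 = 0 by omega)]
      · rw [if_neg (show ¬ (i - (2*m+3) < 2*m) by omega), if_neg h3]

lemma getT' (a b c : α) (m i : ℕ) :
    (TT' a b c m)[i]? =
      if i = 0 then some b
      else if i < 2*m+2 then some (if i % 2 = 0 then a else b)
      else if i = 2*m+2 then some c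
      else if i < 4*m+3 then some (if i % 2 = 0 then b else a)
      else none := by
  have l1 : (abPow a b m).length = 2*m := abPow_length a b m
  match i with
  | 0 => rfl
  | 1 =>
    rw [if_neg (by omega), if_pos (by omega), if_neg (by omega), TT',
      List.getElem?_cons_succ, List.getElem?_cons_zero]
  | (i+2) =>
    rw [TT', List.getElem?_cons_succ, List.getElem?_cons_succ, List.append_assoc,
      if_neg (show ¬ (i+2 = 0) by omega)]
    by_cases h1 : i < 2*m
    · rw [List.getElem?_append_left (show i < (abPow a b m).length by omega),
        abPow_getElem?, if_pos (show i < 2*m by omega),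
        if_pos (show i+2 < 2*m+2 by omega)]
      by_cases hp : i % 2 = 0
      · rw [if_pos hp, if_pos (show (i+2) % 2 = 0 by omega)]
      · rw [if_neg hp, if_neg (show ¬ ((i+2) % 2 = 0) by omega)]
    · rw [List.getElem?_append_right (show (abPow a b m).length ≤ i by omega),
        if_neg (show ¬ (i+2 < 2*m+2) by omega)]
      by_cases h2 : i = 2*m
      · rw [if_pos (show i+2 = 2*m+2 by omega), l1, h2]
        simp
      · rw [if_neg (show ¬ (i+2 = 2*m+2) by omega)]
        have he : i - (abPow a b m).length = (i - (2*m+1)) + 1 := by omega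
        rw [he, List.singleton_append, List.getElem?_cons_succ, abPow_getElem?]
        by_cases h3 : i + 2 < 4*m+3
        · rw [if_pos (show i - (2*m+1) < 2*m by omega), if_pos h3]
          by_cases hp : (i+2) % 2 = 0
          · rw [if_pos hp, if_neg (show ¬ ((i - (2*m+1)) % 2 = 0) by omega)]
          · rw [if_neg hp, if_pos (show (i - (2*m+1)) % 2 = 0 by omega)]
        · rw [if_neg (show ¬ (i - (2*m+1) < 2*m) by omega), if_neg h3]


lemma occ_snoc {u : List α} {x : α} {L : List α} {s : ℕ} (h : Occ (u ++ [x]) L s) :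
    Occ u L s ∧ L[s + u.length]? = some x := by
  have hl : (u ++ [x]).length = u.length + 1 := by simp
  constructor
  · refine ⟨by have := h.1; omega, fun j hj => ?_⟩
    rw [← List.getElem?_append_left (l₂ := [x]) hj]
    exact h.2 j (by omega)
  · have h2 := h.2 u.length (by omega)
    rw [List.getElem?_append_right (le_refl _), Nat.sub_self] at h2
    exact h2.symm

lemma occ_cons {x : α} {u L : List α} {s : ℕ} (h : Occ (x :: u) L s) :
    L[s]? = some x ∧ Occ u L (s+1) := by
  have hl : (x :: u).length = u.length + 1 := by simp
  constructor
  · have h0 := h.2 0 (by omega)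
    rw [List.getElem?_cons_zero] at h0
    simpa using h0.symm
  · refine ⟨by have := h.1; omega, fun j hj => ?_⟩
    have hj1 := h.2 (j+1) (by omega)
    rw [List.getElem?_cons_succ] at hj1
    rw [hj1]
    congr 1
    omega

lemma not_rightMax {u L : List α} (hns : ¬ u <:+ L) {z : α}
    (huniq : ∀ x, (u ++ [x]) <:+: L → x = z) : ¬ RightMaximal u L := by
  rintro (h | ⟨x, y, hxy, hx, hy⟩)
  · exact hns h
  · exact hxy ((huniq x hx).trans (huniq y hy).symm)

lemma not_leftMax {u L : List α} (hns : ¬ u <+: L) {z : α}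
    (huniq : ∀ x, (x :: u) <:+: L → x = z) : ¬ LeftMaximal u L := by
  rintro (h | ⟨x, y, hxy, hx, hy⟩)
  · exact hns h
  · exact hxy ((huniq x hx).trans (huniq y hy).symm)

/-- if `c` occurs in `L` only at position `i0`, a maximal substring containing `c` is `L`. -/
lemma eq_of_c_mem {c : α} {L u : List α} {i0 : ℕ} (hL : ∀ i, L[i]? = some c → i = i0)
    (hcu : c ∈ u) (hmax : MaximalSubstr u L) : u = L := by
  obtain ⟨j, hj, hjc⟩ := mem_iff_getElem?'.1 hcu
  have key : ∀ s, Occ u L s → s + j = i0 := fun s hs => hL _ ((hs.2 j hj).symm.trans hjc)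
  have hsuf : u <:+ L := by
    rcases hmax.2 with hsu | ⟨x, y, hxy, hx, hy⟩
    · exact hsu
    · exfalso; apply hxy
      obtain ⟨s1, h1⟩ := infix_iff_occ.1 hx
      obtain ⟨s2, h2⟩ := infix_iff_occ.1 hy
      obtain ⟨h1u, h1x⟩ := occ_snoc h1
      obtain ⟨h2u, h2y⟩ := occ_snoc h2
      have e1 := key _ h1u
      have e2 := key _ h2u
      have e3 : s1 = s2 := by omega
      rw [e3] at h1x
      exact Option.some.inj (h1x.symm.trans h2y)
  have hpre : u <+: L := by
    rcases hmax.1 with hpu | ⟨x, y, hxy, hx, hy⟩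
    · exact hpu
    · exfalso; apply hxy
      obtain ⟨s1, h1⟩ := infix_iff_occ.1 hx
      obtain ⟨s2, h2⟩ := infix_iff_occ.1 hy
      obtain ⟨h1x, h1u⟩ := occ_cons h1
      obtain ⟨h2y, h2u⟩ := occ_cons h2
      have e1 := key _ h1u
      have e2 := key _ h2u
      have e3 : s1 = s2 := by omega
      rw [e3] at h1x
      exact Option.some.inj (h1x.symm.trans h2y)
  have h0 := key 0 (prefix_iff_occ.1 hpre)
  obtain ⟨hle, hocc⟩ := suffix_iff_occ.1 hsuf
  have h1 := key _ hocc
  exact List.IsPrefix.eq_of_length hpre (by omega)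

lemma cT {a b c : α} (hbc : b ≠ c) (hac : a ≠ c) (m i : ℕ)
    (h : (TT a b c m)[i]? = some c) : i = 2*m+2 := by
  rw [getT] at h
  split_ifs at h with h1 h2 h3 h4 h5 <;>
    first
    | exact absurd (Option.some.inj h) hac
    | exact absurd (Option.some.inj h) hbc
    | assumption
    | exact absurd h (by simp)

lemma cT' {a b c : α} (hbc : b ≠ c) (hac : a ≠ c) (m i : ℕ)
    (h : (TT' a b c m)[i]? = some c) : i = 2*m+2 := by
  rw [getT'] at h
  split_ifs at h with h0 h1 h2 h3 h4 h5 <;>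
    first
    | exact absurd (Option.some.inj h) hac
    | exact absurd (Option.some.inj h) hbc
    | assumption
    | exact absurd h (by simp)

lemma occT_cases {a b c : α} {m : ℕ} {u : List α} {s : ℕ}
    (hcu : c ∉ u) (h : Occ u (TT a b c m) s) :
    (s + u.length ≤ 2*m+2 ∧ ∀ j, j < u.length →
        u[j]? = some (if (s+j) % 2 = 0 then a else b))
    ∨ (2*m+2 < s ∧ ∀ j, j < u.length →
        u[j]? = some (if (s+j) % 2 = 0 then b else a)) := by
  have hT := lengthT a b c m
  have hl := h.1
  rw [hT] at hl
  have hne : ∀ j, j < u.length → s + j ≠ 2*m+2 := by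
    intro j hj heq
    apply hcu
    refine mem_iff_getElem?'.2 ⟨j, hj, ?_⟩
    rw [h.2 j hj, getT, heq, if_neg (by omega), if_pos rfl]
  by_cases hs : s + u.length ≤ 2*m+2
  · left
    refine ⟨hs, fun j hj => ?_⟩
    rw [h.2 j hj, getT, if_pos (by omega)]
  · right
    have hs2 : 2*m+2 < s := by
      by_contra hc2
      exact hne (2*m+2 - s) (by omega) (by omega)
    refine ⟨hs2, fun j hj => ?_⟩
    rw [h.2 j hj, getT, if_neg (by omega), if_neg (by omega), if_pos (by omega)]

lemma occT'_cases {a b c : α} {m : ℕ} {u : List α} {s : ℕ}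
    (hcu : c ∉ u) (h : Occ u (TT' a b c m) s) :
    (1 ≤ s ∧ s + u.length ≤ 2*m+2 ∧ ∀ j, j < u.length →
        u[j]? = some (if (s+j) % 2 = 0 then a else b))
    ∨ (2*m+2 < s ∧ ∀ j, j < u.length →
        u[j]? = some (if (s+j) % 2 = 0 then b else a))
    ∨ (s = 0 ∧ u.length ≤ 2*m+2 ∧
        (∀ j, j < u.length → 1 ≤ j → u[j]? = some (if j % 2 = 0 then a else b)) ∧
        (0 < u.length → u[0]? = some b)) := by
  have hT := lengthT' a b c m
  have hl := h.1
  rw [hT] at hl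
  have hne : ∀ j, j < u.length → s + j ≠ 2*m+2 := by
    intro j hj heq
    apply hcu
    refine mem_iff_getElem?'.2 ⟨j, hj, ?_⟩
    rw [h.2 j hj, getT', heq, if_neg (by omega), if_neg (by omega), if_pos rfl]
  by_cases hs0 : s = 0
  · subst hs0
    by_cases hu0 : u.length = 0
    · right; right
      exact ⟨rfl, by omega, fun j hj _ => by omega, fun h0 => by omega⟩
    · right; right
      have hs : u.length ≤ 2*m+2 := by
        by_contra hc2
        exact hne (2*m+2) (by omega) (by omega)
      refine ⟨rfl, hs, fun j hj hj1 => ?_, fun h0 => ?_⟩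
      · rw [h.2 j hj, getT', Nat.zero_add, if_neg (by omega), if_pos (by omega)]
      · rw [h.2 0 h0, getT', if_pos rfl]
  · by_cases hs : s + u.length ≤ 2*m+2
    · left
      refine ⟨by omega, hs, fun j hj => ?_⟩
      rw [h.2 j hj, getT', if_neg (by omega), if_pos (by omega)]
    · right; left
      have hs2 : 2*m+2 < s := by
        by_contra hc2
        exact hne (2*m+2 - s) (by omega) (by omega)
      refine ⟨hs2, fun j hj => ?_⟩
      rw [h.2 j hj, getT', if_neg (by omega), if_neg (by omega), if_neg (by omega),
        if_pos (by omega)]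

lemma shape0 {a b : α} {u : List α}
    (h : ∀ j, j < u.length → u[j]? = some (if j % 2 = 0 then a else b)) :
    (∃ k, u = abPow a b k) ∨ (∃ k, u = abPow a b k ++ [a]) := by
  by_cases hp : u.length % 2 = 0
  · left
    refine ⟨u.length / 2, List.ext_getElem? fun n => ?_⟩
    by_cases hn : n < u.length
    · rw [h n hn, abPow_getElem?, if_pos (show n < 2*(u.length/2) by omega)]
    · rw [List.getElem?_eq_none (show u.length ≤ n by omega), abPow_getElem?,
        if_neg (show ¬ n < 2*(u.length/2) by omega)]
  · right
    refine ⟨u.length / 2, List.ext_getElem? fun n => ?_⟩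
    by_cases hn : n < u.length
    · rw [h n hn]
      by_cases hn2 : n < 2 * (u.length / 2)
      · rw [List.getElem?_append_left (show n < (abPow a b (u.length/2)).length by
          rw [abPow_length]; omega), abPow_getElem?, if_pos hn2]
      · rw [List.getElem?_append_right (show (abPow a b (u.length/2)).length ≤ n by
          rw [abPow_length]; omega), abPow_length,
          show n - 2*(u.length/2) = 0 by omega, if_pos (show n % 2 = 0 by omega)]
        rfl
    · rw [List.getElem?_eq_none (show u.length ≤ n by omega),
        List.getElem?_eq_none (show (abPow a b (u.length/2) ++ [a]).length ≤ n by
          simp [abPow_length]; omega)]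


lemma shape1 {a b : α} {u : List α}
    (h : ∀ j, j < u.length → u[j]? = some (if j % 2 = 0 then b else a)) :
    u = [] ∨ (∃ k, u = b :: abPow a b k) ∨ (∃ k, u = b :: (abPow a b k ++ [a])) := by
  cases u with
  | nil => exact Or.inl rfl
  | cons x v =>
    right
    have hx : x = b := by
      have h0 := h 0 (by simp)
      rw [List.getElem?_cons_zero, if_pos (by omega)] at h0
      exact Option.some.inj h0
    have hv : ∀ j, j < v.length → v[j]? = some (if j % 2 = 0 then a else b) := by
      intro j hj
      have hj1 := h (j+1) (by simp; omega)
      rw [List.getElem?_cons_succ] at hj1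
      rw [hj1]
      by_cases hp : j % 2 = 0
      · rw [if_pos hp, if_neg (by omega)]
      · rw [if_neg hp, if_pos (by omega)]
    rcases shape0 hv with ⟨k, hk⟩ | ⟨k, hk⟩
    · exact Or.inl ⟨k, by rw [hx, hk]⟩
    · exact Or.inr ⟨k, by rw [hx, hk]⟩

lemma pattern_even {x y : α} {u : List α} {s : ℕ} (hs : s % 2 = 0)
    (h : ∀ j, j < u.length → u[j]? = some (if (s+j) % 2 = 0 then x else y)) :
    ∀ j, j < u.length → u[j]? = some (if j % 2 = 0 then x else y) := by
  intro j hj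
  rw [h j hj]
  by_cases hp : j % 2 = 0
  · rw [if_pos hp, if_pos (by omega)]
  · rw [if_neg hp, if_neg (by omega)]

lemma pattern_odd {x y : α} {u : List α} {s : ℕ} (hs : s % 2 = 1)
    (h : ∀ j, j < u.length → u[j]? = some (if (s+j) % 2 = 0 then x else y)) :
    ∀ j, j < u.length → u[j]? = some (if j % 2 = 0 then y else x) := by
  intro j hj
  rw [h j hj]
  by_cases hp : j % 2 = 0
  · rw [if_pos hp, if_neg (by omega)]
  · rw [if_neg hp, if_pos (by omega)]

lemma get_Pa (a b x : α) (k j : ℕ) :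
    (abPow a b k ++ [x])[j]? =
      if j < 2*k then some (if j % 2 = 0 then a else b)
      else if j = 2*k then some x else none := by
  by_cases h : j < 2*k
  · rw [List.getElem?_append_left (show j < (abPow a b k).length by rw [abPow_length]; omega),
      abPow_getElem?, if_pos h, if_pos h]
  · rw [List.getElem?_append_right (show (abPow a b k).length ≤ j by rw [abPow_length]; omega),
      abPow_length, if_neg h]
    by_cases h2 : j = 2*k
    · rw [if_pos h2, show j - 2*k = 0 by omega]
      rfl
    · rw [if_neg h2]
      exact List.getElem?_eq_none (by simp; omega)

lemma head_Pa (a b : α) (k : ℕ) : (abPow a b k ++ [a])[0]? = some a := by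
  rw [get_Pa]
  by_cases h : 0 < 2*k
  · rw [if_pos h, if_pos (by norm_num)]
  · rw [if_neg h, if_pos (by omega)]

lemma length_Pa (a b x : α) (k : ℕ) : (abPow a b k ++ [x]).length = 2*k+1 := by
  simp [abPow_length]

lemma getElem?_append_len (u : List α) (x : α) : (u ++ [x])[u.length]? = some x := by
  rw [List.getElem?_append_right (le_refl _), Nat.sub_self]
  rfl

lemma c_notin_P {a b c : α} (hac : a ≠ c) (hbc : b ≠ c) (k : ℕ) : c ∉ abPow a b k :=
  fun h => (mem_abPow h).elim (fun e => hac e.symm) (fun e => hbc e.symm)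

lemma c_notin_Pa {a b c : α} (hac : a ≠ c) (hbc : b ≠ c) (k : ℕ) :
    c ∉ abPow a b k ++ [a] := by
  intro h
  rcases List.mem_append.1 h with h | h
  · exact c_notin_P hac hbc k h
  · exact hac (List.mem_singleton.1 h).symm

lemma c_notin_bP {a b c : α} (hac : a ≠ c) (hbc : b ≠ c) (k : ℕ) :
    c ∉ b :: abPow a b k := by
  intro h
  rcases List.mem_cons.1 h with h | h
  · exact hbc h.symm
  · exact c_notin_P hac hbc k h

lemma c_notin_bPa {a b c : α} (hac : a ≠ c) (hbc : b ≠ c) (k : ℕ) :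
    c ∉ b :: (abPow a b k ++ [a]) := by
  intro h
  rcases List.mem_cons.1 h with h | h
  · exact hbc h.symm
  · exact c_notin_Pa hac hbc k h

lemma c_notin_snoc {c x : α} {u : List α} (hcu : c ∉ u) (hxc : ¬ x = c) :
    c ∉ u ++ [x] := by
  intro h
  rcases List.mem_append.1 h with h | h
  · exact hcu h
  · exact hxc (List.mem_singleton.1 h).symm


lemma notRM_Pm1_T {a b c : α} (hac : a ≠ c) (hbc : b ≠ c) (m : ℕ) :
    ¬ RightMaximal (abPow a b (m+1)) (TT a b c m) := by
  have hcu : c ∉ abPow a b (m+1) := c_notin_P hac hbc _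
  have hlu : (abPow a b (m+1)).length = 2*m+2 := by rw [abPow_length]; omega
  apply not_rightMax (z := c)
  · intro hsuf
    obtain ⟨hle, hocc⟩ := suffix_iff_occ.1 hsuf
    rw [lengthT] at hle hocc
    rcases occT_cases hcu hocc with ⟨hr, _⟩ | ⟨hr, _⟩ <;> omega
  · intro x hx
    by_contra hxc
    obtain ⟨s1, h1⟩ := infix_iff_occ.1 hx
    have hcux : c ∉ abPow a b (m+1) ++ [x] := c_notin_snoc hcu (fun e => hxc e)
    have hl1 : (abPow a b (m+1) ++ [x]).length = 2*m+3 := by simp [abPow_length]; omega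
    have hT := h1.1
    rw [lengthT] at hT
    rcases occT_cases hcux h1 with ⟨hr, _⟩ | ⟨hr, _⟩ <;> omega

lemma notRM_Pa_T {a b c : α} (hab : a ≠ b) (hac : a ≠ c) (hbc : b ≠ c) (m k : ℕ) :
    ¬ RightMaximal (abPow a b k ++ [a]) (TT a b c m) := by
  have hcu : c ∉ abPow a b k ++ [a] := c_notin_Pa hac hbc k
  have hlu := length_Pa a b a k
  apply not_rightMax (z := b)
  · intro hsuf
    obtain ⟨hle, hocc⟩ := suffix_iff_occ.1 hsuf
    rw [lengthT] at hle hocc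
    rcases occT_cases hcu hocc with ⟨hr, hpat⟩ | ⟨hr, hpat⟩
    · omega
    · have h0 := hpat 0 (by omega)
      rw [head_Pa, if_pos (by omega)] at h0
      exact hab (Option.some.inj h0)
  · intro x hx
    obtain ⟨s1, h1⟩ := infix_iff_occ.1 hx
    by_cases hcx : x = c
    · exfalso
      subst hcx
      obtain ⟨h1u, h1x⟩ := occ_snoc h1
      have hpos := cT hbc hac m _ h1x
      rcases occT_cases hcu h1u with ⟨hr, hpat⟩ | ⟨hr, hpat⟩
      · have h0 := hpat 0 (by omega)
        rw [head_Pa, if_neg (by omega)] at h0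
        exact hab (Option.some.inj h0)
      · omega
    · have hcux : c ∉ (abPow a b k ++ [a]) ++ [x] := c_notin_snoc hcu hcx
      have hlux : ((abPow a b k ++ [a]) ++ [x]).length = 2*k+2 := by simp [abPow_length]
      rcases occT_cases hcux h1 with ⟨hr, hpat⟩ | ⟨hr, hpat⟩
      · have h0 := hpat 0 (by omega)
        rw [List.getElem?_append_left (by omega), head_Pa] at h0
        have hs1 : s1 % 2 = 0 := by
          by_contra ho
          rw [if_neg (by omega)] at h0
          exact hab (Option.some.inj h0)
        have hx2 := hpat ((abPow a b k ++ [a]).length) (by omega)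
        rw [getElem?_append_len, if_neg (by omega)] at hx2
        exact Option.some.inj hx2
      · have h0 := hpat 0 (by omega)
        rw [List.getElem?_append_left (by omega), head_Pa] at h0
        have hs1 : s1 % 2 = 1 := by
          by_contra ho
          rw [if_pos (by omega)] at h0
          exact hab (Option.some.inj h0)
        have hx2 := hpat ((abPow a b k ++ [a]).length) (by omega)
        rw [getElem?_append_len, if_pos (by omega)] at hx2
        exact Option.some.inj hx2

lemma notLM_b_T {a b c : α} (hab : a ≠ b) (hac : a ≠ c) (hbc : b ≠ c) (m : ℕ)
    {w : List α} (hcw : c ∉ b :: w) :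
    ¬ LeftMaximal (b :: w) (TT a b c m) := by
  apply not_leftMax (z := a)
  · intro hpre
    have hocc := prefix_iff_occ.1 hpre
    have h0 := hocc.2 0 (by simp)
    rw [List.getElem?_cons_zero, getT, if_pos (show 0+0 < 2*m+2 by omega),
      if_pos (show (0+0) % 2 = 0 by omega)] at h0
    exact hab (Option.some.inj h0).symm
  · intro x hx
    obtain ⟨s1, h1⟩ := infix_iff_occ.1 hx
    by_cases hcx : x = c
    · exfalso
      subst hcx
      obtain ⟨h1c, h1u⟩ := occ_cons h1
      have hpos := cT hbc hac m _ h1c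
      rcases occT_cases hcw h1u with ⟨hr, hpat⟩ | ⟨hr, hpat⟩
      · have hw : 0 < (b::w).length := by simp
        omega
      · have h0 := hpat 0 (by simp)
        rw [List.getElem?_cons_zero, if_neg (by omega)] at h0
        exact hab (Option.some.inj h0).symm
    · have hcxu : c ∉ x :: b :: w := by
        intro hmem
        rcases List.mem_cons.1 hmem with h | h
        · exact hcx h.symm
        · exact hcw h
      rcases occT_cases hcxu h1 with ⟨hr, hpat⟩ | ⟨hr, hpat⟩
      · have hb := hpat 1 (by simp)
        rw [List.getElem?_cons_succ, List.getElem?_cons_zero] at hb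
        have hs1 : s1 % 2 = 0 := by
          by_contra ho
          rw [if_pos (by omega)] at hb
          exact hab (Option.some.inj hb).symm
        have h0 := hpat 0 (by simp)
        rw [List.getElem?_cons_zero, if_pos (by omega)] at h0
        exact Option.some.inj h0
      · have hb := hpat 1 (by simp)
        rw [List.getElem?_cons_succ, List.getElem?_cons_zero] at hb
        have hs1 : s1 % 2 = 1 := by
          by_contra ho
          rw [if_neg (by omega)] at hb
          exact hab (Option.some.inj hb).symm
        have h0 := hpat 0 (by simp)
        rw [List.getElem?_cons_zero, if_neg (by omega)] at h0
        exact Option.some.inj h0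

lemma converse_T {a b c : α} (hab : a ≠ b) (hac : a ≠ c) (hbc : b ≠ c) (m : ℕ)
    {u : List α} (hinf : u <:+: TT a b c m) (hmax : MaximalSubstr u (TT a b c m)) :
    u = TT a b c m ∨ ∃ k, k ≤ m ∧ u = abPow a b k := by
  by_cases hcu : c ∈ u
  · exact Or.inl (eq_of_c_mem (cT hbc hac m) hcu hmax)
  · right
    obtain ⟨s, hocc⟩ := infix_iff_occ.1 hinf
    have hT := hocc.1
    rw [lengthT] at hT
    rcases occT_cases hcu hocc with ⟨hr, hpat⟩ | ⟨hr, hpat⟩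
    · by_cases hs : s % 2 = 0
      · rcases shape0 (pattern_even hs hpat) with ⟨k, hk⟩ | ⟨k, hk⟩
        · have hlk : u.length = 2*k := by rw [hk, abPow_length]
          by_cases hkm : k ≤ m
          · exact ⟨k, hkm, hk⟩
          · exfalso
            have hk1 : k = m+1 := by omega
            rw [hk1] at hk
            rw [hk] at hmax
            exact notRM_Pm1_T hac hbc m hmax.2
        · exfalso
          rw [hk] at hmax
          exact notRM_Pa_T hab hac hbc m k hmax.2
      · rcases shape1 (pattern_odd (by omega) hpat) with hk | ⟨k, hk⟩ | ⟨k, hk⟩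
        · exact ⟨0, by omega, by rw [hk]; rfl⟩
        · exfalso
          rw [hk] at hmax hcu
          exact notLM_b_T hab hac hbc m hcu hmax.1
        · exfalso
          rw [hk] at hmax hcu
          exact notLM_b_T hab hac hbc m hcu hmax.1
    · by_cases hs : s % 2 = 0
      · rcases shape1 (pattern_even hs hpat) with hk | ⟨k, hk⟩ | ⟨k, hk⟩
        · exact ⟨0, by omega, by rw [hk]; rfl⟩
        · exfalso
          rw [hk] at hmax hcu
          exact notLM_b_T hab hac hbc m hcu hmax.1
        · exfalso
          rw [hk] at hmax hcu
          exact notLM_b_T hab hac hbc m hcu hmax.1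
      · rcases shape0 (pattern_odd (by omega) hpat) with ⟨k, hk⟩ | ⟨k, hk⟩
        · have hlk : u.length = 2*k := by rw [hk, abPow_length]
          exact ⟨k, by omega, hk⟩
        · exfalso
          rw [hk] at hmax
          exact notRM_Pa_T hab hac hbc m k hmax.2


lemma suffix_snoc {u v : List α} (x : α) (h : u <:+ v) : u ++ [x] <:+ v ++ [x] := by
  obtain ⟨p, rfl⟩ := h
  exact ⟨p, (List.append_assoc p u [x]).symm⟩

lemma prefix_P_T (a b c : α) (m : ℕ) {k : ℕ} (hk : k ≤ m+1) :
    abPow a b k <+: TT a b c m :=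
  (abPow_prefix a b hk).trans ⟨[c] ++ abPow a b m, by rw [TT, List.append_assoc]⟩

lemma infix_Pa_T (a b c : α) (m : ℕ) {k : ℕ} (hk : k ≤ m) :
    abPow a b k ++ [a] <:+: TT a b c m := by
  have h1 : abPow a b k ++ [a] <+: abPow a b (k+1) :=
    ⟨[b], by rw [abPow_succ', List.append_assoc]; rfl⟩
  exact (h1.trans (prefix_P_T a b c m (by omega))).isInfix

lemma infix_Pc_T (a b c : α) (m : ℕ) {k : ℕ} (hk : k ≤ m+1) :
    abPow a b k ++ [c] <:+: TT a b c m := by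
  have h1 : abPow a b k ++ [c] <:+ abPow a b (m+1) ++ [c] :=
    suffix_snoc c (abPow_suffix a b hk)
  have h2 : abPow a b (m+1) ++ [c] <+: TT a b c m := ⟨abPow a b m, by rw [TT]⟩
  exact h1.isInfix.trans h2.isInfix

lemma memT {a b c x : α} {m : ℕ} (h : x ∈ TT a b c m) : x = a ∨ x = b ∨ x = c := by
  rw [TT] at h
  rcases List.mem_append.1 h with h | h
  · rcases List.mem_append.1 h with h | h
    · rcases mem_abPow h with h | h
      · exact Or.inl h
      · exact Or.inr (Or.inl h)
    · exact Or.inr (Or.inr (List.mem_singleton.1 h))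
  · rcases mem_abPow h with h | h
    · exact Or.inl h
    · exact Or.inr (Or.inl h)

lemma a_mem_T (a b c : α) (m : ℕ) : a ∈ TT a b c m := by
  rw [TT, abPow_succ]
  simp

lemma b_mem_T (a b c : α) (m : ℕ) : b ∈ TT a b c m := by
  rw [TT, abPow_succ]
  simp

lemma c_mem_T (a b c : α) (m : ℕ) : c ∈ TT a b c m := by
  rw [TT]
  simp

lemma toFinsetT [DecidableEq α] (a b c : α) (m : ℕ) :
    (TT a b c m).toFinset = {a, b, c} := by
  ext x
  simp only [List.mem_toFinset, Finset.mem_insert, Finset.mem_singleton]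
  constructor
  · exact memT
  · rintro (h | h | h) <;> rw [h]
    · exact a_mem_T a b c m
    · exact b_mem_T a b c m
    · exact c_mem_T a b c m

lemma T_ne_P (a b c : α) (m k : ℕ) : abPow a b k ≠ TT a b c m := by
  intro h
  have := congrArg List.length h
  rw [abPow_length, lengthT] at this
  omega

lemma D_T_T [DecidableEq α] (a b c : α) (m : ℕ) : D (TT a b c m) (TT a b c m) = 0 := by
  rw [D, if_pos rfl]

lemma D_eps_T [DecidableEq α] {a b c : α} (hab : a ≠ b) (hac : a ≠ c) (hbc : b ≠ c)
    (m : ℕ) : D (TT a b c m) [] = 3 := by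
  rw [D, if_neg (by
    intro h
    have := congrArg List.length h
    rw [lengthT] at this
    simp at this)]
  have hf : (TT a b c m).toFinset.filter (fun z => ([] ++ [z]) <:+: TT a b c m)
      = (TT a b c m).toFinset := by
    apply Finset.filter_true_of_mem
    intro z hz
    obtain ⟨s, t, hst⟩ := List.append_of_mem (List.mem_toFinset.1 hz)
    exact ⟨s, t, by rw [hst]; simp⟩
  rw [hf, toFinsetT, Finset.card_insert_of_notMem (by simp [hab, hac]),
    Finset.card_insert_of_notMem (by simp [hbc]), Finset.card_singleton]

lemma D_P_T [DecidableEq α] {a b c : α} (hab : a ≠ b) (hac : a ≠ c) (hbc : b ≠ c)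
    {m k : ℕ} (hk : 1 ≤ k) (hkm : k ≤ m) : D (TT a b c m) (abPow a b k) = 2 := by
  rw [D, if_neg (T_ne_P a b c m k)]
  have hf : (TT a b c m).toFinset.filter (fun z => (abPow a b k ++ [z]) <:+: TT a b c m)
      = {a, c} := by
    ext z
    simp only [Finset.mem_filter, Finset.mem_insert, Finset.mem_singleton,
      List.mem_toFinset]
    constructor
    · rintro ⟨hz, hinf⟩
      rcases memT hz with h | h | h
      · exact Or.inl h
      · exfalso
        obtain ⟨s, hocc⟩ := infix_iff_occ.1 hinf
        have hcu : c ∉ abPow a b k ++ [z] :=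
          c_notin_snoc (c_notin_P hac hbc k) (by rw [h]; exact hbc)
        rcases occT_cases hcu hocc with ⟨hr, hpat⟩ | ⟨hr, hpat⟩
        · have h1 := hpat (2*k-1) (by rw [length_Pa]; omega)
          rw [get_Pa, if_pos (by omega), if_neg (by omega)] at h1
          have hp1 : ¬ (s + (2*k-1)) % 2 = 0 := by
            intro hp
            rw [if_pos hp] at h1
            exact hab (Option.some.inj h1).symm
          have h2 := hpat (2*k) (by rw [length_Pa]; omega)
          rw [get_Pa, if_neg (by omega), if_pos rfl, h] at h2
          have hp2 : ¬ (s + 2*k) % 2 = 0 := by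
            intro hp
            rw [if_pos hp] at h2
            exact hab (Option.some.inj h2).symm
          omega
        · have h1 := hpat (2*k-1) (by rw [length_Pa]; omega)
          rw [get_Pa, if_pos (by omega), if_neg (by omega)] at h1
          have hp1 : (s + (2*k-1)) % 2 = 0 := by
            by_contra hp
            rw [if_neg hp] at h1
            exact hab (Option.some.inj h1).symm
          have h2 := hpat (2*k) (by rw [length_Pa]; omega)
          rw [get_Pa, if_neg (by omega), if_pos rfl, h] at h2
          have hp2 : (s + 2*k) % 2 = 0 := by
            by_contra hp
            rw [if_neg hp] at h2
            exact hab (Option.some.inj h2).symm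
          omega
      · exact Or.inr h
    · rintro (h | h) <;> rw [h]
      · exact ⟨a_mem_T a b c m, infix_Pa_T a b c m hkm⟩
      · exact ⟨c_mem_T a b c m, infix_Pc_T a b c m (by omega)⟩
  rw [hf, Finset.card_insert_of_notMem (by simp [hac]), Finset.card_singleton]

lemma max_P_T {a b c : α} (hac : a ≠ c) (m : ℕ) {k : ℕ} (hk : k ≤ m) :
    MaximalSubstr (abPow a b k) (TT a b c m) := by
  constructor
  · exact Or.inl (prefix_P_T a b c m (by omega))
  · by_cases hk0 : k = 0
    · subst hk0
      exact Or.inl List.nil_suffix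
    · exact Or.inr ⟨a, c, hac, infix_Pa_T a b c m hk, infix_Pc_T a b c m (by omega)⟩

lemma max_T_T (a b c : α) (m : ℕ) : MaximalSubstr (TT a b c m) (TT a b c m) :=
  ⟨Or.inl (List.prefix_refl _), Or.inl (List.suffix_refl _)⟩

open scoped Classical in
lemma eT [DecidableEq α] {a b c : α} (hab : a ≠ b) (hac : a ≠ c) (hbc : b ≠ c)
    (m : ℕ) : cdawgSize (TT a b c m) = 2*m+3 := by
  rw [cdawgSize]
  have hset : (TT a b c m).sublists.toFinset.filter
        (fun x => x <:+: TT a b c m ∧ MaximalSubstr x (TT a b c m))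
      = (Finset.range (m+1)).image (abPow a b) ∪ {TT a b c m} := by
    ext u
    simp only [Finset.mem_filter, List.mem_toFinset, List.mem_sublists, Finset.mem_union,
      Finset.mem_image, Finset.mem_range, Finset.mem_singleton]
    constructor
    · rintro ⟨hsub, hinf, hmax⟩
      rcases converse_T hab hac hbc m hinf hmax with h | ⟨k, hkm, hk⟩
      · exact Or.inr h
      · exact Or.inl ⟨k, by omega, hk.symm⟩
    · rintro (⟨k, hkr, rfl⟩ | rfl)
      · exact ⟨(prefix_P_T a b c m (by omega)).sublist,
          (prefix_P_T a b c m (by omega)).isInfix, max_P_T hac m (by omega)⟩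
      · exact ⟨List.Sublist.refl _, List.infix_refl _, max_T_T a b c m⟩
  rw [hset, Finset.sum_union (by
      rw [Finset.disjoint_singleton_right]
      intro hmem
      obtain ⟨k, _, hk⟩ := Finset.mem_image.1 hmem
      exact T_ne_P a b c m k hk),
    Finset.sum_image (by
      intro x _ y _ h
      have := congrArg List.length h
      rw [abPow_length, abPow_length] at this
      omega),
    Finset.sum_singleton, D_T_T, Finset.sum_range_succ',
    show abPow a b 0 = [] from rfl, D_eps_T hab hac hbc m,
    Finset.sum_congr rfl (fun i hi => D_P_T hab hac hbc (by omega)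
      (by have := Finset.mem_range.1 hi; omega)),
    Finset.sum_const, Finset.card_range, smul_eq_mul]
  omega


lemma prefix_cons {x : α} {u v : List α} (h : u <+: v) : x :: u <+: x :: v := by
  obtain ⟨t, rfl⟩ := h
  exact ⟨t, rfl⟩

lemma suffix_X_T' (a b c : α) (m : ℕ) :
    abPow a b m ++ [c] ++ abPow a b m <:+ TT' a b c m := ⟨[b, b], rfl⟩

lemma suffix_bX_T' (a b c : α) (m : ℕ) :
    b :: (abPow a b m ++ [c] ++ abPow a b m) <:+ TT' a b c m := ⟨[b], rfl⟩

lemma prefix_Pm_X (a b c : α) (m : ℕ) :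
    abPow a b m <+: abPow a b m ++ [c] ++ abPow a b m :=
  ⟨[c] ++ abPow a b m, (List.append_assoc _ _ _).symm⟩

lemma infix_of_prefix_Pm {a b c : α} {m : ℕ} {u : List α} (h : u <+: abPow a b m) :
    u <:+: TT' a b c m :=
  ((h.trans (prefix_Pm_X a b c m)).isInfix).trans (suffix_X_T' a b c m).isInfix

lemma infix_of_suffix_Pmc {a b c : α} {m : ℕ} {u : List α}
    (h : u <:+ abPow a b m ++ [c]) : u <:+: TT' a b c m :=
  (h.isInfix).trans
    ((List.IsPrefix.isInfix ⟨abPow a b m, rfl⟩).trans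
      (suffix_X_T' a b c m).isInfix)

lemma prefix_Pa_succ (a b : α) (k : ℕ) : abPow a b k ++ [a] <+: abPow a b (k+1) :=
  ⟨[b], by rw [abPow_succ', List.append_assoc]; rfl⟩

lemma infix_P_T' (a b c : α) {m k : ℕ} (hk : k ≤ m) : abPow a b k <:+: TT' a b c m :=
  infix_of_prefix_Pm (abPow_prefix a b hk)

lemma infix_Pa_T' (a b c : α) {m k : ℕ} (hk : k + 1 ≤ m) :
    abPow a b k ++ [a] <:+: TT' a b c m :=
  infix_of_prefix_Pm ((prefix_Pa_succ a b k).trans (abPow_prefix a b hk))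

lemma infix_Pc_T' (a b c : α) {m k : ℕ} (hk : k ≤ m) :
    abPow a b k ++ [c] <:+: TT' a b c m :=
  infix_of_suffix_Pmc (suffix_snoc c (abPow_suffix a b hk))

lemma infix_cP_T' (a b c : α) {m k : ℕ} (hk : k ≤ m) :
    c :: abPow a b k <:+: TT' a b c m := by
  have h1 : c :: abPow a b k <+: c :: abPow a b m := prefix_cons (abPow_prefix a b hk)
  have h2 : c :: abPow a b m <:+ abPow a b m ++ [c] ++ abPow a b m :=
    ⟨abPow a b m, by rw [List.append_assoc]; rfl⟩
  exact (h1.isInfix).trans (h2.isInfix.trans (suffix_X_T' a b c m).isInfix)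

lemma infix_bP_T' (a b c : α) {m k : ℕ} (hk : k ≤ m) :
    b :: abPow a b k <:+: TT' a b c m := by
  have h1 : b :: abPow a b k <+: b :: (abPow a b m ++ [c] ++ abPow a b m) :=
    prefix_cons ((abPow_prefix a b hk).trans (prefix_Pm_X a b c m))
  exact (h1.isInfix).trans (suffix_bX_T' a b c m).isInfix

lemma infix_bPa_T' (a b c : α) {m k : ℕ} (hk : k + 1 ≤ m) :
    b :: (abPow a b k ++ [a]) <:+: TT' a b c m := by
  have h1 : b :: (abPow a b k ++ [a]) <+: b :: (abPow a b m ++ [c] ++ abPow a b m) :=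
    prefix_cons (((prefix_Pa_succ a b k).trans (abPow_prefix a b hk)).trans
      (prefix_Pm_X a b c m))
  exact (h1.isInfix).trans (suffix_bX_T' a b c m).isInfix

lemma suffix_bP_P (a b : α) (k : ℕ) : b :: abPow a b k <:+ abPow a b (k+1) :=
  ⟨[a], (abPow_succ a b k).symm⟩

lemma infix_bPc_T' (a b c : α) {m k : ℕ} (hk : k + 1 ≤ m) :
    (b :: abPow a b k) ++ [c] <:+: TT' a b c m :=
  infix_of_suffix_Pmc (suffix_snoc c ((suffix_bP_P a b k).trans (abPow_suffix a b hk)))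

lemma infix_bbP_T' (a b c : α) {m k : ℕ} (hk : k ≤ m) :
    b :: b :: abPow a b k <:+: TT' a b c m := by
  have h1 : b :: b :: abPow a b k <+: TT' a b c m := by
    rw [TT']
    exact prefix_cons (prefix_cons ((abPow_prefix a b hk).trans (prefix_Pm_X a b c m)))
  exact h1.isInfix

lemma get_bP (a b : α) (k j : ℕ) :
    (b :: abPow a b k)[j]? =
      if j < 2*k+1 then some (if j % 2 = 0 then b else a) else none := by
  match j with
  | 0 => rw [List.getElem?_cons_zero, if_pos (by omega), if_pos (by omega)]
  | (j+1) =>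
    rw [List.getElem?_cons_succ, abPow_getElem?]
    by_cases h : j < 2*k
    · rw [if_pos h, if_pos (show j+1 < 2*k+1 by omega)]
      by_cases hp : j % 2 = 0
      · rw [if_pos hp, if_neg (show ¬ ((j+1) % 2 = 0) by omega)]
      · rw [if_neg hp, if_pos (show (j+1) % 2 = 0 by omega)]
    · rw [if_neg h, if_neg (show ¬ (j+1 < 2*k+1) by omega)]

lemma b_mem_T' (a b c : α) (m : ℕ) : b ∈ TT' a b c m := by
  rw [TT']
  simp

lemma c_mem_T' (a b c : α) (m : ℕ) : c ∈ TT' a b c m := by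
  rw [TT']
  simp

lemma a_mem_T' (a b c : α) {m : ℕ} (hm : 1 ≤ m) : a ∈ TT' a b c m := by
  obtain ⟨n, rfl⟩ : ∃ n, m = n + 1 := ⟨m - 1, by omega⟩
  rw [TT', abPow_succ]
  simp

lemma memT' {a b c x : α} {m : ℕ} (h : x ∈ TT' a b c m) : x = a ∨ x = b ∨ x = c := by
  rw [TT'] at h
  rcases List.mem_cons.1 h with h | h
  · exact Or.inr (Or.inl h)
  · rcases List.mem_cons.1 h with h | h
    · exact Or.inr (Or.inl h)
    · rcases List.mem_append.1 h with h | h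
      · rcases List.mem_append.1 h with h | h
        · rcases mem_abPow h with h | h
          · exact Or.inl h
          · exact Or.inr (Or.inl h)
        · exact Or.inr (Or.inr (List.mem_singleton.1 h))
      · rcases mem_abPow h with h | h
        · exact Or.inl h
        · exact Or.inr (Or.inl h)

lemma toFinsetT' [DecidableEq α] (a b c : α) {m : ℕ} (hm : 1 ≤ m) :
    (TT' a b c m).toFinset = {a, b, c} := by
  ext x
  simp only [List.mem_toFinset, Finset.mem_insert, Finset.mem_singleton]
  constructor
  · exact memT'
  · rintro (h | h | h) <;> rw [h]
    · exact a_mem_T' a b c hm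
    · exact b_mem_T' a b c m
    · exact c_mem_T' a b c m


lemma notRM_Pa_T' {a b c : α} (hab : a ≠ b) (hac : a ≠ c) (hbc : b ≠ c) (m k : ℕ) :
    ¬ RightMaximal (abPow a b k ++ [a]) (TT' a b c m) := by
  have hcu : c ∉ abPow a b k ++ [a] := c_notin_Pa hac hbc k
  have hlu := length_Pa a b a k
  apply not_rightMax (z := b)
  · intro hsuf
    obtain ⟨hle, hocc⟩ := suffix_iff_occ.1 hsuf
    rw [lengthT'] at hle hocc
    rcases occT'_cases hcu hocc with ⟨hs1, hr, hpat⟩ | ⟨hr, hpat⟩ | ⟨hs0, hl2, hpat, hhead⟩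
    · omega
    · have h0 := hpat 0 (by omega)
      rw [head_Pa, if_pos (by omega)] at h0
      exact hab (Option.some.inj h0)
    · have h0 := hhead (by omega)
      rw [head_Pa] at h0
      exact hab (Option.some.inj h0)
  · intro x hx
    obtain ⟨s1, h1⟩ := infix_iff_occ.1 hx
    by_cases hcx : x = c
    · exfalso
      subst hcx
      obtain ⟨h1u, h1x⟩ := occ_snoc h1
      have hpos := cT' hbc hac m _ h1x
      rcases occT'_cases hcu h1u with ⟨hs1, hr, hpat⟩ | ⟨hr, hpat⟩ | ⟨hs0, hl2, hpat, hhead⟩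
      · have h0 := hpat 0 (by omega)
        rw [head_Pa] at h0
        have hp : s1 % 2 = 0 := by
          by_contra hp
          rw [if_neg (by omega)] at h0
          exact hab (Option.some.inj h0)
        omega
      · omega
      · have h0 := hhead (by omega)
        rw [head_Pa] at h0
        exact hab (Option.some.inj h0)
    · have hcux : c ∉ (abPow a b k ++ [a]) ++ [x] := c_notin_snoc hcu hcx
      have hlux : ((abPow a b k ++ [a]) ++ [x]).length = 2*k+2 := by simp [abPow_length]
      rcases occT'_cases hcux h1 with ⟨hs1, hr, hpat⟩ | ⟨hr, hpat⟩ | ⟨hs0, hl2, hpat, hhead⟩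
      · have h0 := hpat 0 (by omega)
        rw [List.getElem?_append_left (by omega), head_Pa] at h0
        have hp : s1 % 2 = 0 := by
          by_contra hp
          rw [if_neg (by omega)] at h0
          exact hab (Option.some.inj h0)
        have hx2 := hpat ((abPow a b k ++ [a]).length) (by omega)
        rw [getElem?_append_len, if_neg (by omega)] at hx2
        exact Option.some.inj hx2
      · have h0 := hpat 0 (by omega)
        rw [List.getElem?_append_left (by omega), head_Pa] at h0
        have hp : s1 % 2 = 1 := by
          by_contra hp
          rw [if_pos (by omega)] at h0
          exact hab (Option.some.inj h0)
        have hx2 := hpat ((abPow a b k ++ [a]).length) (by omega)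
        rw [getElem?_append_len, if_pos (by omega)] at hx2
        exact Option.some.inj hx2
      · have h0 := hhead (by omega)
        rw [List.getElem?_append_left (by omega), head_Pa] at h0
        exact absurd (Option.some.inj h0) hab

lemma notRM_bPa_T' {a b c : α} (hab : a ≠ b) (hac : a ≠ c) (hbc : b ≠ c) (m k : ℕ) :
    ¬ RightMaximal (b :: (abPow a b k ++ [a])) (TT' a b c m) := by
  have hcu : c ∉ b :: (abPow a b k ++ [a]) := c_notin_bPa hac hbc k
  have hlu : (b :: (abPow a b k ++ [a])).length = 2*k+2 := by simp [abPow_length]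
  apply not_rightMax (z := b)
  · intro hsuf
    obtain ⟨hle, hocc⟩ := suffix_iff_occ.1 hsuf
    rw [lengthT'] at hle hocc
    rcases occT'_cases hcu hocc with ⟨hs1, hr, hpat⟩ | ⟨hr, hpat⟩ | ⟨hs0, hl2, hpat, hhead⟩
    · omega
    · have h0 := hpat 0 (by omega)
      rw [List.getElem?_cons_zero, if_neg (by omega)] at h0
      exact hab (Option.some.inj h0).symm
    · omega
  · intro x hx
    obtain ⟨s1, h1⟩ := infix_iff_occ.1 hx
    by_cases hcx : x = c
    · exfalso
      subst hcx
      obtain ⟨h1u, h1x⟩ := occ_snoc h1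
      have hpos := cT' hbc hac m _ h1x
      rcases occT'_cases hcu h1u with ⟨hs1, hr, hpat⟩ | ⟨hr, hpat⟩ | ⟨hs0, hl2, hpat, hhead⟩
      · have h0 := hpat 0 (by omega)
        rw [List.getElem?_cons_zero] at h0
        have hp : ¬ s1 % 2 = 0 := by
          intro hp
          rw [if_pos (by omega)] at h0
          exact hab (Option.some.inj h0).symm
        omega
      · omega
      · have h0 := hpat 1 (by omega) (by omega)
        rw [List.getElem?_cons_succ, head_Pa, if_neg (by omega)] at h0
        exact hab (Option.some.inj h0)
    · have hcux : c ∉ (b :: (abPow a b k ++ [a])) ++ [x] := c_notin_snoc hcu hcx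
      have hlux : ((b :: (abPow a b k ++ [a])) ++ [x]).length = 2*k+3 := by simp [abPow_length]
      rcases occT'_cases hcux h1 with ⟨hs1, hr, hpat⟩ | ⟨hr, hpat⟩ | ⟨hs0, hl2, hpat, hhead⟩
      · have h0 := hpat 0 (by omega)
        rw [List.getElem?_append_left (by omega), List.getElem?_cons_zero] at h0
        have hp : s1 % 2 = 1 := by
          by_contra hp
          rw [if_pos (by omega)] at h0
          exact hab (Option.some.inj h0).symm
        have hx2 := hpat ((b :: (abPow a b k ++ [a])).length) (by omega)
        rw [getElem?_append_len, if_neg (by omega)] at hx2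
        exact Option.some.inj hx2
      · have h0 := hpat 0 (by omega)
        rw [List.getElem?_append_left (by omega), List.getElem?_cons_zero] at h0
        have hp : s1 % 2 = 0 := by
          by_contra hp
          rw [if_neg (by omega)] at h0
          exact hab (Option.some.inj h0).symm
        have hx2 := hpat ((b :: (abPow a b k ++ [a])).length) (by omega)
        rw [getElem?_append_len, if_pos (by omega)] at hx2
        exact Option.some.inj hx2
      · have h0 := hpat 1 (by omega) (by omega)
        rw [List.getElem?_append_left (by omega), List.getElem?_cons_succ, head_Pa,
          if_neg (by omega)] at h0
        exact absurd (Option.some.inj h0) hab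

lemma notLM_bPm_T' {a b c : α} (hab : a ≠ b) (hac : a ≠ c) (hbc : b ≠ c) {m : ℕ}
    (hm : 1 ≤ m) : ¬ LeftMaximal (b :: abPow a b m) (TT' a b c m) := by
  have hcu : c ∉ b :: abPow a b m := c_notin_bP hac hbc m
  have hlu : (b :: abPow a b m).length = 2*m+1 := by simp [abPow_length]
  apply not_leftMax (z := b)
  · intro hpre
    have hocc := prefix_iff_occ.1 hpre
    have h1 := hocc.2 1 (by omega)
    rw [get_bP, if_pos (by omega), if_neg (by omega), getT',
      if_neg (by omega), if_pos (by omega), if_neg (by omega)] at h1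
    exact hab (Option.some.inj h1)
  · intro x hx
    obtain ⟨s1, h1⟩ := infix_iff_occ.1 hx
    by_cases hcx : x = c
    · exfalso
      subst hcx
      obtain ⟨h1c, h1u⟩ := occ_cons h1
      have hpos := cT' hbc hac m _ h1c
      rcases occT'_cases hcu h1u with ⟨hs1, hr, hpat⟩ | ⟨hr, hpat⟩ | ⟨hs0, hl2, hpat, hhead⟩
      · omega
      · have h0 := hpat 0 (by omega)
        rw [get_bP, if_pos (by omega), if_pos (by omega), if_neg (by omega)] at h0
        exact hab (Option.some.inj h0).symm
      · omega
    · have hcxu : c ∉ x :: (b :: abPow a b m) := by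
        intro hmem
        rcases List.mem_cons.1 hmem with h | h
        · exact hcx h.symm
        · exact hcu h
      have hlxu : (x :: (b :: abPow a b m)).length = 2*m+2 := by simp [abPow_length]
      have hT := h1.1
      rw [lengthT'] at hT
      rcases occT'_cases hcxu h1 with ⟨hs1, hr, hpat⟩ | ⟨hr, hpat⟩ | ⟨hs0, hl2, hpat, hhead⟩
      · omega
      · omega
      · have h0 := hhead (by omega)
        rw [List.getElem?_cons_zero] at h0
        exact Option.some.inj h0

lemma notRM_bb_T' {a b c : α} (hab : a ≠ b) (hac : a ≠ c) (hbc : b ≠ c) (m : ℕ)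
    {u : List α} (h0 : u[0]? = some b) (h1 : u[1]? = some b) (hl2 : 2 ≤ u.length)
    (hcu : c ∉ u) : ¬ RightMaximal u (TT' a b c m) := by
  intro hRM
  have huniq : ∀ x, (u ++ [x]) <:+: TT' a b c m → some x = (TT' a b c m)[u.length]? := by
    intro x hx
    obtain ⟨s1, hocc1⟩ := infix_iff_occ.1 hx
    obtain ⟨h1u, h1x⟩ := occ_snoc hocc1
    rcases occT'_cases hcu h1u with ⟨hs1, hr, hpat⟩ | ⟨hr, hpat⟩ | ⟨hs0, _, _, _⟩
    · have p0 := hpat 0 (by omega)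
      have p1 := hpat 1 (by omega)
      rw [h0] at p0
      rw [h1] at p1
      have e0 : ¬ (s1+0) % 2 = 0 := by
        intro hp
        rw [if_pos hp] at p0
        exact hab (Option.some.inj p0).symm
      have e1 : ¬ (s1+1) % 2 = 0 := by
        intro hp
        rw [if_pos hp] at p1
        exact hab (Option.some.inj p1).symm
      omega
    · have p0 := hpat 0 (by omega)
      have p1 := hpat 1 (by omega)
      rw [h0] at p0
      rw [h1] at p1
      have e0 : (s1+0) % 2 = 0 := by
        by_contra hp
        rw [if_neg hp] at p0
        exact hab (Option.some.inj p0).symm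
      have e1 : (s1+1) % 2 = 0 := by
        by_contra hp
        rw [if_neg hp] at p1
        exact hab (Option.some.inj p1).symm
      omega
    · rw [hs0, Nat.zero_add] at h1x
      exact h1x.symm
  rcases hRM with hsuf | ⟨x, y, hxy, hx, hy⟩
  · obtain ⟨hle, hocc⟩ := suffix_iff_occ.1 hsuf
    have hT := lengthT' a b c m
    rcases occT'_cases hcu hocc with ⟨hs1, hr, hpat⟩ | ⟨hr, hpat⟩ | ⟨hs0, hl2', hpat, hhead⟩
    · have p0 := hpat 0 (by omega)
      have p1 := hpat 1 (by omega)
      rw [h0] at p0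
      rw [h1] at p1
      have e0 : ¬ (TT' a b c m).length - u.length + 0 % 2 = 0 → True := fun _ => trivial
      have e0' : ¬ ((TT' a b c m).length - u.length + 0) % 2 = 0 := by
        intro hp
        rw [if_pos hp] at p0
        exact hab (Option.some.inj p0).symm
      have e1' : ¬ ((TT' a b c m).length - u.length + 1) % 2 = 0 := by
        intro hp
        rw [if_pos hp] at p1
        exact hab (Option.some.inj p1).symm
      omega
    · have p0 := hpat 0 (by omega)
      have p1 := hpat 1 (by omega)
      rw [h0] at p0
      rw [h1] at p1
      have e0' : ((TT' a b c m).length - u.length + 0) % 2 = 0 := by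
        by_contra hp
        rw [if_neg hp] at p0
        exact hab (Option.some.inj p0).symm
      have e1' : ((TT' a b c m).length - u.length + 1) % 2 = 0 := by
        by_contra hp
        rw [if_neg hp] at p1
        exact hab (Option.some.inj p1).symm
      omega
    · rw [hT] at hs0 hle
      omega
  · exact hxy (Option.some.inj ((huniq x hx).trans (huniq y hy).symm))

lemma converse_T' {a b c : α} (hab : a ≠ b) (hac : a ≠ c) (hbc : b ≠ c) {m : ℕ}
    (hm : 1 ≤ m) {u : List α} (hinf : u <:+: TT' a b c m)
    (hmax : MaximalSubstr u (TT' a b c m)) :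
    u = TT' a b c m ∨ (∃ k, k ≤ m ∧ u = abPow a b k)
      ∨ (∃ k, k + 1 ≤ m ∧ u = b :: abPow a b k) := by
  by_cases hcu : c ∈ u
  · exact Or.inl (eq_of_c_mem (cT' hbc hac m) hcu hmax)
  · obtain ⟨s, hocc⟩ := infix_iff_occ.1 hinf
    have hT := hocc.1
    rw [lengthT'] at hT
    rcases occT'_cases hcu hocc with ⟨hs1, hr, hpat⟩ | ⟨hr, hpat⟩ | ⟨hs0, hl2, hpat, hhead⟩
    · by_cases hs : s % 2 = 0
      · rcases shape0 (pattern_even hs hpat) with ⟨k, hk⟩ | ⟨k, hk⟩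
        · have hlk : u.length = 2*k := by rw [hk, abPow_length]
          exact Or.inr (Or.inl ⟨k, by omega, hk⟩)
        · exfalso
          rw [hk] at hmax
          exact notRM_Pa_T' hab hac hbc m k hmax.2
      · rcases shape1 (pattern_odd (by omega) hpat) with hk | ⟨k, hk⟩ | ⟨k, hk⟩
        · exact Or.inr (Or.inl ⟨0, by omega, by rw [hk]; rfl⟩)
        · have hlk : u.length = 2*k+1 := by rw [hk]; simp [abPow_length]
          by_cases hkm : k + 1 ≤ m
          · exact Or.inr (Or.inr ⟨k, hkm, hk⟩)
          · exfalso
            have hkm' : k = m := by omega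
            rw [hkm'] at hk
            rw [hk] at hmax
            exact notLM_bPm_T' hab hac hbc hm hmax.1
        · exfalso
          rw [hk] at hmax
          exact notRM_bPa_T' hab hac hbc m k hmax.2
    · by_cases hs : s % 2 = 0
      · rcases shape1 (pattern_even hs hpat) with hk | ⟨k, hk⟩ | ⟨k, hk⟩
        · exact Or.inr (Or.inl ⟨0, by omega, by rw [hk]; rfl⟩)
        · have hlk : u.length = 2*k+1 := by rw [hk]; simp [abPow_length]
          exact Or.inr (Or.inr ⟨k, by omega, hk⟩)
        · exfalso
          rw [hk] at hmax
          exact notRM_bPa_T' hab hac hbc m k hmax.2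
      · rcases shape0 (pattern_odd (by omega) hpat) with ⟨k, hk⟩ | ⟨k, hk⟩
        · have hlk : u.length = 2*k := by rw [hk, abPow_length]
          exact Or.inr (Or.inl ⟨k, by omega, hk⟩)
        · exfalso
          rw [hk] at hmax
          exact notRM_Pa_T' hab hac hbc m k hmax.2
    · rcases u with _ | ⟨x, v⟩
      · exact Or.inr (Or.inl ⟨0, by omega, rfl⟩)
      · have hx : x = b := by
          have hh := hhead (by simp)
          rw [List.getElem?_cons_zero] at hh
          exact Option.some.inj hh
        have hv : ∀ j, j < v.length → v[j]? = some (if j % 2 = 0 then b else a) := by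
          intro j hj
          have hp := hpat (j+1) (by simp only [List.length_cons]; omega) (by omega)
          rw [List.getElem?_cons_succ] at hp
          rw [hp]
          by_cases hq : j % 2 = 0
          · rw [if_pos hq, if_neg (by omega)]
          · rw [if_neg hq, if_pos (by omega)]
        rcases shape1 hv with hk | ⟨k, hk⟩ | ⟨k, hk⟩
        · subst hk
          exact Or.inr (Or.inr ⟨0, by omega, by rw [hx]; rfl⟩)
        · exfalso
          refine notRM_bb_T' hab hac hbc m ?_ ?_ ?_ hcu hmax.2
          · rw [hx]
            exact List.getElem?_cons_zero
          · rw [List.getElem?_cons_succ, hk, List.getElem?_cons_zero]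
          · rw [hk]
            simp
        · exfalso
          refine notRM_bb_T' hab hac hbc m ?_ ?_ ?_ hcu hmax.2
          · rw [hx]
            exact List.getElem?_cons_zero
          · rw [List.getElem?_cons_succ, hk, List.getElem?_cons_zero]
          · rw [hk]
            simp


lemma not_infix_Pb_T' {a b c : α} (hab : a ≠ b) (hac : a ≠ c) (hbc : b ≠ c) (m : ℕ)
    {k : ℕ} (hk : 1 ≤ k) : ¬ (abPow a b k ++ [b]) <:+: TT' a b c m := by
  intro hinf
  obtain ⟨s, hocc⟩ := infix_iff_occ.1 hinf
  have hcu : c ∉ abPow a b k ++ [b] := c_notin_snoc (c_notin_P hac hbc k) hbc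
  have hlu := length_Pa a b b k
  rcases occT'_cases hcu hocc with ⟨hs1, hr, hpat⟩ | ⟨hr, hpat⟩ | ⟨hs0, hl2, hpat, hhead⟩
  · have h1 := hpat (2*k-1) (by omega)
    rw [get_Pa, if_pos (show 2*k-1 < 2*k by omega),
      if_neg (show ¬ ((2*k-1) % 2 = 0) by omega)] at h1
    have hp1 : ¬ (s + (2*k-1)) % 2 = 0 := by
      intro hp
      rw [if_pos hp] at h1
      exact hab (Option.some.inj h1).symm
    have h2 := hpat (2*k) (by omega)
    rw [get_Pa, if_neg (show ¬ (2*k < 2*k) by omega), if_pos rfl] at h2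
    have hp2 : ¬ (s + 2*k) % 2 = 0 := by
      intro hp
      rw [if_pos hp] at h2
      exact hab (Option.some.inj h2).symm
    omega
  · have h1 := hpat (2*k-1) (by omega)
    rw [get_Pa, if_pos (show 2*k-1 < 2*k by omega),
      if_neg (show ¬ ((2*k-1) % 2 = 0) by omega)] at h1
    have hp1 : (s + (2*k-1)) % 2 = 0 := by
      by_contra hp
      rw [if_neg hp] at h1
      exact hab (Option.some.inj h1).symm
    have h2 := hpat (2*k) (by omega)
    rw [get_Pa, if_neg (show ¬ (2*k < 2*k) by omega), if_pos rfl] at h2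
    have hp2 : (s + 2*k) % 2 = 0 := by
      by_contra hp
      rw [if_neg hp] at h2
      exact hab (Option.some.inj h2).symm
    omega
  · have h0 := hhead (by omega)
    rw [get_Pa, if_pos (show 0 < 2*k by omega), if_pos (show 0 % 2 = 0 by omega)] at h0
    exact hab (Option.some.inj h0)

lemma not_infix_Pma_T' {a b c : α} (hab : a ≠ b) (hac : a ≠ c) (hbc : b ≠ c) {m : ℕ}
    (hm : 1 ≤ m) : ¬ (abPow a b m ++ [a]) <:+: TT' a b c m := by
  intro hinf
  obtain ⟨s, hocc⟩ := infix_iff_occ.1 hinf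
  have hcu := c_notin_Pa hac hbc m
  have hlu := length_Pa a b a m
  have hT := hocc.1
  rw [lengthT'] at hT
  rcases occT'_cases hcu hocc with ⟨hs1, hr, hpat⟩ | ⟨hr, hpat⟩ | ⟨hs0, hl2, hpat, hhead⟩
  · have h0 := hpat 0 (by omega)
    rw [head_Pa, if_neg (show ¬ (s+0) % 2 = 0 by omega)] at h0
    exact hab (Option.some.inj h0)
  · omega
  · have h0 := hhead (by omega)
    rw [head_Pa] at h0
    exact hab (Option.some.inj h0)

lemma not_infix_bPb_T' {a b c : α} (hab : a ≠ b) (hac : a ≠ c) (hbc : b ≠ c) (m : ℕ)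
    {k : ℕ} (hk : 1 ≤ k) : ¬ ((b :: abPow a b k) ++ [b]) <:+: TT' a b c m := by
  intro hinf
  obtain ⟨s, hocc⟩ := infix_iff_occ.1 hinf
  have hcu : c ∉ (b :: abPow a b k) ++ [b] := c_notin_snoc (c_notin_bP hac hbc k) hbc
  have hlu : ((b :: abPow a b k) ++ [b]).length = 2*k+2 := by simp [abPow_length]
  have hlb : (b :: abPow a b k).length = 2*k+1 := by simp [abPow_length]
  rcases occT'_cases hcu hocc with ⟨hs1, hr, hpat⟩ | ⟨hr, hpat⟩ | ⟨hs0, hl2, hpat, hhead⟩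
  · have h1 := hpat (2*k) (by omega)
    rw [List.getElem?_append_left (show 2*k < (b :: abPow a b k).length by omega),
      get_bP, if_pos (show 2*k < 2*k+1 by omega),
      if_pos (show (2*k) % 2 = 0 by omega)] at h1
    have hp1 : ¬ (s + 2*k) % 2 = 0 := by
      intro hp
      rw [if_pos hp] at h1
      exact hab (Option.some.inj h1).symm
    have h2 := hpat ((b :: abPow a b k).length) (by omega)
    rw [getElem?_append_len] at h2
    have hp2 : ¬ (s + (b :: abPow a b k).length) % 2 = 0 := by
      intro hp
      rw [if_pos hp] at h2
      exact hab (Option.some.inj h2).symm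
    omega
  · have h1 := hpat (2*k) (by omega)
    rw [List.getElem?_append_left (show 2*k < (b :: abPow a b k).length by omega),
      get_bP, if_pos (show 2*k < 2*k+1 by omega),
      if_pos (show (2*k) % 2 = 0 by omega)] at h1
    have hp1 : (s + 2*k) % 2 = 0 := by
      by_contra hp
      rw [if_neg hp] at h1
      exact hab (Option.some.inj h1).symm
    have h2 := hpat ((b :: abPow a b k).length) (by omega)
    rw [getElem?_append_len] at h2
    have hp2 : (s + (b :: abPow a b k).length) % 2 = 0 := by
      by_contra hp
      rw [if_neg hp] at h2
      exact hab (Option.some.inj h2).symm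
    omega
  · have h1 := hpat (2*k) (by omega) (by omega)
    rw [List.getElem?_append_left (show 2*k < (b :: abPow a b k).length by omega),
      get_bP] at h1
    have e : (2*k) % 2 = 0 := by omega
    have e2 : 2*k < 2*k+1 := by omega
    simp only [if_pos e, if_pos e2] at h1
    exact hab (Option.some.inj h1).symm

lemma D_T'_T' [DecidableEq α] (a b c : α) (m : ℕ) :
    D (TT' a b c m) (TT' a b c m) = 0 := by
  rw [D, if_pos rfl]

lemma D_eps_T' [DecidableEq α] {a b c : α} (hab : a ≠ b) (hac : a ≠ c) (hbc : b ≠ c)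
    {m : ℕ} (hm : 1 ≤ m) : D (TT' a b c m) [] = 3 := by
  rw [D, if_neg (by
    intro h
    have := congrArg List.length h
    rw [lengthT'] at this
    simp at this)]
  have hf : (TT' a b c m).toFinset.filter (fun z => ([] ++ [z]) <:+: TT' a b c m)
      = (TT' a b c m).toFinset := by
    apply Finset.filter_true_of_mem
    intro z hz
    obtain ⟨s, t, hst⟩ := List.append_of_mem (List.mem_toFinset.1 hz)
    exact ⟨s, t, by rw [hst]; simp⟩
  rw [hf, toFinsetT' a b c hm, Finset.card_insert_of_notMem (by simp [hab, hac]),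
    Finset.card_insert_of_notMem (by simp [hbc]), Finset.card_singleton]

lemma D_b_T' [DecidableEq α] {a b c : α} (hab : a ≠ b) (hac : a ≠ c) (hbc : b ≠ c)
    {m : ℕ} (hm : 1 ≤ m) : D (TT' a b c m) [b] = 3 := by
  rw [D, if_neg (by
    intro h
    have := congrArg List.length h
    rw [List.length_singleton, lengthT'] at this
    omega)]
  have hf : (TT' a b c m).toFinset.filter (fun z => ([b] ++ [z]) <:+: TT' a b c m)
      = (TT' a b c m).toFinset := by
    apply Finset.filter_true_of_mem
    intro z hz
    rcases memT' (List.mem_toFinset.1 hz) with h | h | h <;> rw [h]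
    · exact infix_bPa_T' a b c (show 0+1 ≤ m by omega)
    · exact ⟨[], abPow a b m ++ [c] ++ abPow a b m, rfl⟩
    · exact infix_bPc_T' a b c (show 0+1 ≤ m by omega)
  rw [hf, toFinsetT' a b c hm, Finset.card_insert_of_notMem (by simp [hab, hac]),
    Finset.card_insert_of_notMem (by simp [hbc]), Finset.card_singleton]

lemma D_P_T' [DecidableEq α] {a b c : α} (hab : a ≠ b) (hac : a ≠ c) (hbc : b ≠ c)
    {m k : ℕ} (hk : 1 ≤ k) (hkm : k + 1 ≤ m) :
    D (TT' a b c m) (abPow a b k) = 2 := by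
  rw [D, if_neg (by
    intro h
    have := congrArg List.length h
    rw [abPow_length, lengthT'] at this
    omega)]
  have hf : (TT' a b c m).toFinset.filter (fun z => (abPow a b k ++ [z]) <:+: TT' a b c m)
      = {a, c} := by
    ext z
    simp only [Finset.mem_filter, Finset.mem_insert, Finset.mem_singleton,
      List.mem_toFinset]
    constructor
    · rintro ⟨hz, hinf⟩
      rcases memT' hz with h | h | h
      · exact Or.inl h
      · exfalso
        rw [h] at hinf
        exact not_infix_Pb_T' hab hac hbc m hk hinf
      · exact Or.inr h
    · rintro (h | h) <;> rw [h]
      · exact ⟨a_mem_T' a b c (by omega), infix_Pa_T' a b c hkm⟩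
      · exact ⟨c_mem_T' a b c m, infix_Pc_T' a b c (by omega)⟩
  rw [hf, Finset.card_insert_of_notMem (by simp [hac]), Finset.card_singleton]

lemma D_Pm_T' [DecidableEq α] {a b c : α} (hab : a ≠ b) (hac : a ≠ c) (hbc : b ≠ c)
    {m : ℕ} (hm : 1 ≤ m) : D (TT' a b c m) (abPow a b m) = 1 := by
  rw [D, if_neg (by
    intro h
    have := congrArg List.length h
    rw [abPow_length, lengthT'] at this
    omega)]
  have hf : (TT' a b c m).toFinset.filter (fun z => (abPow a b m ++ [z]) <:+: TT' a b c m)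
      = {c} := by
    ext z
    simp only [Finset.mem_filter, Finset.mem_singleton, List.mem_toFinset]
    constructor
    · rintro ⟨hz, hinf⟩
      rcases memT' hz with h | h | h
      · exfalso
        rw [h] at hinf
        exact not_infix_Pma_T' hab hac hbc hm hinf
      · exfalso
        rw [h] at hinf
        exact not_infix_Pb_T' hab hac hbc m hm hinf
      · exact h
    · intro h
      rw [h]
      exact ⟨c_mem_T' a b c m, infix_Pc_T' a b c (le_refl m)⟩
  rw [hf, Finset.card_singleton]

lemma D_bP_T' [DecidableEq α] {a b c : α} (hab : a ≠ b) (hac : a ≠ c) (hbc : b ≠ c)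
    {m k : ℕ} (hk : 1 ≤ k) (hkm : k + 1 ≤ m) :
    D (TT' a b c m) (b :: abPow a b k) = 2 := by
  rw [D, if_neg (by
    intro h
    have := congrArg List.length h
    rw [List.length_cons, abPow_length, lengthT'] at this
    omega)]
  have hf : (TT' a b c m).toFinset.filter
        (fun z => ((b :: abPow a b k) ++ [z]) <:+: TT' a b c m) = {a, c} := by
    ext z
    simp only [Finset.mem_filter, Finset.mem_insert, Finset.mem_singleton,
      List.mem_toFinset]
    constructor
    · rintro ⟨hz, hinf⟩
      rcases memT' hz with h | h | h
      · exact Or.inl h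
      · exfalso
        rw [h] at hinf
        exact not_infix_bPb_T' hab hac hbc m hk hinf
      · exact Or.inr h
    · rintro (h | h) <;> rw [h]
      · exact ⟨a_mem_T' a b c (by omega), infix_bPa_T' a b c hkm⟩
      · exact ⟨c_mem_T' a b c m, infix_bPc_T' a b c hkm⟩
  rw [hf, Finset.card_insert_of_notMem (by simp [hac]), Finset.card_singleton]

lemma max_P_T' {a b c : α} (hac : a ≠ c) (hbc : b ≠ c) {m k : ℕ} (hk : k ≤ m) :
    MaximalSubstr (abPow a b k) (TT' a b c m) := by
  constructor
  · exact Or.inr ⟨b, c, hbc, infix_bP_T' a b c hk, infix_cP_T' a b c hk⟩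
  · by_cases hkm : k + 1 ≤ m
    · exact Or.inr ⟨a, c, hac, infix_Pa_T' a b c hkm, infix_Pc_T' a b c hk⟩
    · have hke : k = m := by omega
      subst hke
      exact Or.inl ⟨b :: b :: (abPow a b k ++ [c]), by rw [TT']; simp⟩
  
lemma max_bP_T' {a b c : α} (hab : a ≠ b) (hac : a ≠ c) {m k : ℕ} (hk : k + 1 ≤ m) :
    MaximalSubstr (b :: abPow a b k) (TT' a b c m) := by
  constructor
  · refine Or.inr ⟨a, b, hab, ?_, infix_bbP_T' a b c (by omega)⟩
    rw [show a :: b :: abPow a b k = abPow a b (k+1) from (abPow_succ a b k).symm]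
    exact infix_P_T' a b c hk
  · exact Or.inr ⟨a, c, hac, infix_bPa_T' a b c hk, infix_bPc_T' a b c hk⟩

lemma max_T'_T' (a b c : α) (m : ℕ) : MaximalSubstr (TT' a b c m) (TT' a b c m) :=
  ⟨Or.inl (List.prefix_refl _), Or.inl (List.suffix_refl _)⟩

open scoped Classical in
lemma eT' [DecidableEq α] {a b c : α} (hab : a ≠ b) (hac : a ≠ c) (hbc : b ≠ c)
    {m : ℕ} (hm : 1 ≤ m) : cdawgSize (TT' a b c m) = 4*m+3 := by
  obtain ⟨n, rfl⟩ : ∃ n, m = n + 1 := ⟨m - 1, by omega⟩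
  rw [cdawgSize]
  have hset : (TT' a b c (n+1)).sublists.toFinset.filter
        (fun x => x <:+: TT' a b c (n+1) ∧ MaximalSubstr x (TT' a b c (n+1)))
      = ((Finset.range (n+2)).image (abPow a b)
          ∪ (Finset.range (n+1)).image (fun k => b :: abPow a b k))
        ∪ {TT' a b c (n+1)} := by
    ext u
    simp only [Finset.mem_filter, List.mem_toFinset, List.mem_sublists, Finset.mem_union,
      Finset.mem_image, Finset.mem_range, Finset.mem_singleton]
    constructor
    · rintro ⟨hsub, hinf, hmax⟩
      rcases converse_T' hab hac hbc hm hinf hmax with h | ⟨k, hkm, hk⟩ | ⟨k, hkm, hk⟩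
      · exact Or.inr h
      · exact Or.inl (Or.inl ⟨k, by omega, hk.symm⟩)
      · exact Or.inl (Or.inr ⟨k, by omega, hk.symm⟩)
    · rintro ((⟨k, hkr, rfl⟩ | ⟨k, hkr, rfl⟩) | rfl)
      · exact ⟨(infix_P_T' a b c (by omega)).sublist, infix_P_T' a b c (by omega),
          max_P_T' hac hbc (by omega)⟩
      · exact ⟨(infix_bP_T' a b c (by omega)).sublist, infix_bP_T' a b c (by omega),
          max_bP_T' hab hac (by omega)⟩
      · exact ⟨List.Sublist.refl _, List.infix_refl _, max_T'_T' a b c (n+1)⟩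
  have S1 : ∑ k ∈ Finset.range (n+2), D (TT' a b c (n+1)) (abPow a b k) = 2*n+4 := by
    rw [Finset.sum_range_succ, Finset.sum_range_succ',
      show abPow a b 0 = [] from rfl, D_eps_T' hab hac hbc (by omega),
      D_Pm_T' hab hac hbc (by omega),
      Finset.sum_congr rfl (fun i hi => D_P_T' hab hac hbc (show 1 ≤ i+1 by omega)
        (show (i+1)+1 ≤ n+1 by have := Finset.mem_range.1 hi; omega)),
      Finset.sum_const, Finset.card_range, smul_eq_mul]
    omega
  have S2 : ∑ k ∈ Finset.range (n+1), D (TT' a b c (n+1)) (b :: abPow a b k) = 2*n+3 := by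
    rw [Finset.sum_range_succ',
      show (b :: abPow a b 0) = [b] from rfl, D_b_T' hab hac hbc (by omega),
      Finset.sum_congr rfl (fun i hi => D_bP_T' hab hac hbc (show 1 ≤ i+1 by omega)
        (show (i+1)+1 ≤ n+1 by have := Finset.mem_range.1 hi; omega)),
      Finset.sum_const, Finset.card_range, smul_eq_mul]
    omega
  rw [hset, Finset.sum_union (by
      rw [Finset.disjoint_singleton_right, Finset.mem_union]
      rintro (hmem | hmem)
      · obtain ⟨k, _, hkk⟩ := Finset.mem_image.1 hmem
        have := congrArg List.length hkk
        rw [abPow_length, lengthT'] at this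
        omega
      · obtain ⟨k, hkr, hkk⟩ := Finset.mem_image.1 hmem
        have h2 := congrArg List.length hkk
        rw [List.length_cons, abPow_length, lengthT'] at h2
        have := Finset.mem_range.1 hkr
        omega),
    Finset.sum_union (by
      rw [Finset.disjoint_left]
      intro u hu1 hu2
      obtain ⟨k1, _, hk1⟩ := Finset.mem_image.1 hu1
      obtain ⟨k2, _, hk2⟩ := Finset.mem_image.1 hu2
      have := congrArg List.length (hk1.trans hk2.symm)
      rw [abPow_length, List.length_cons, abPow_length] at this
      omega),
    Finset.sum_image (by
      intro x _ y _ h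
      have := congrArg List.length h
      rw [abPow_length, abPow_length] at this
      omega),
    Finset.sum_image (by
      intro x _ y _ h
      have := congrArg List.length h
      rw [List.length_cons, List.length_cons, abPow_length, abPow_length] at this
      omega),
    Finset.sum_singleton, D_T'_T', S1, S2]
  omega

end Stmt18


/-- Theorem 6, lower bound for left-end substitution: for
`T = (ab)^(m+1) c (ab)^m` and `T' = bb(ab)^m c (ab)^m` (first character `a`
substituted by `b`), `e(T) = 2m + 3` and `e(T') = 4m + 3`, hence
`e(T') - e(T) = e(T) - 3`. -/
theorem stmt18 {α : Type*} [DecidableEq α] (a b c : α) (hab : a ≠ b)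
    (hbc : b ≠ c) (hac : a ≠ c) (m : ℕ) (hm : 1 ≤ m) :
    cdawgSize (abPow a b (m + 1) ++ [c] ++ abPow a b m) = 2 * m + 3 ∧
    cdawgSize (b :: b :: (abPow a b m ++ [c] ++ abPow a b m)) = 4 * m + 3 ∧
    cdawgSize (b :: b :: (abPow a b m ++ [c] ++ abPow a b m)) -
        cdawgSize (abPow a b (m + 1) ++ [c] ++ abPow a b m) =
      cdawgSize (abPow a b (m + 1) ++ [c] ++ abPow a b m) - 3 := by
  have h1 : cdawgSize (abPow a b (m + 1) ++ [c] ++ abPow a b m) = 2*m+3 :=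
    Stmt18.eT hab hac hbc m
  have h2 : cdawgSize (b :: b :: (abPow a b m ++ [c] ++ abPow a b m)) = 4*m+3 :=
    Stmt18.eT' hab hac hbc hm
  refine ⟨h1, h2, ?_⟩
  rw [h1, h2]
  omega
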